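/- arXiv:2112.06115 — 5 statements merged into one kernel-verified Lean document; each statement's English description precedes it below -/
import Mathlib

section
/- The weighted Delannoy numbers satisfy the recurrence wt(D_{n,k}) = z·wt(D_{n-1,k-1}) + x·wt(D_{n-1,k}) + y·wt(D_{n,k-1}) for n,k ≥ 1, where wt(D_{n,k}) = Σ_{i=0}^{n} C(n,i)·C(k,i)·x^{n-i}·y^{k-i}·(xy+z)^{i}, with initial values wt(D_{n,0}) = x^n and wt(D_{0,k}) = y^k. -/
open Finset

/-- The weighted Delannoy number `wt(D_{n,k})`. -/
def wtDel {R : Type*} [CommRing R] (x y z : R) (n k : ℕ) : R :=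
  ∑ i ∈ Finset.range (n + 1),
    (n.choose i : R) * (k.choose i : R) * x ^ (n - i) * y ^ (k - i) * (x * y + z) ^ i

private lemma wtDel_succ_succ {R : Type*} [CommRing R] (x y z : R) (n k : ℕ) :
    wtDel x y z (n + 1) (k + 1) =
      z * wtDel x y z n k + x * wtDel x y z n (k + 1) + y * wtDel x y z (n + 1) k := by
  -- telescoping function
  set t : ℕ → R := fun i =>
    (n.choose i : R) * (k.choose i : R) * x ^ (n + 1 - i) * y ^ (k + 1 - i) * (x * y + z) ^ i
    with ht
  have hL : wtDel x y z (n + 1) (k + 1) =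
      (∑ i ∈ range (n + 1), ((n + 1).choose (i + 1) : R) * ((k + 1).choose (i + 1) : R) *
        x ^ (n - i) * y ^ (k - i) * (x * y + z) ^ (i + 1)) + x ^ (n + 1) * y ^ (k + 1) := by
    unfold wtDel
    rw [Finset.sum_range_succ']
    simp [Nat.succ_sub_succ]
  have hZ : z * wtDel x y z n k =
      ∑ i ∈ range (n + 1), z * ((n.choose i : R) * (k.choose i : R) *
        x ^ (n - i) * y ^ (k - i) * (x * y + z) ^ i) := by
    unfold wtDel
    rw [Finset.mul_sum]
  have hX : x * wtDel x y z n (k + 1) =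
      (∑ i ∈ range (n + 1), x * ((n.choose (i + 1) : R) * ((k + 1).choose (i + 1) : R) *
        x ^ (n - (i + 1)) * y ^ (k - i) * (x * y + z) ^ (i + 1))) + x ^ (n + 1) * y ^ (k + 1) := by
    unfold wtDel
    rw [Finset.mul_sum, Finset.sum_range_succ', Finset.sum_range_succ]
    simp [Nat.succ_sub_succ, Nat.choose_succ_self, pow_succ]
    ring
  have hY : y * wtDel x y z (n + 1) k =
      (∑ i ∈ range (n + 1), y * (((n + 1).choose (i + 1) : R) * (k.choose (i + 1) : R) *
        x ^ (n - i) * y ^ (k - (i + 1)) * (x * y + z) ^ (i + 1))) + x ^ (n + 1) * y ^ (k + 1) := by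
    unfold wtDel
    rw [Finset.mul_sum, Finset.sum_range_succ']
    simp [Nat.succ_sub_succ, pow_succ]
    ring
  have hpoint : ∀ i ∈ range (n + 1),
      ((n + 1).choose (i + 1) : R) * ((k + 1).choose (i + 1) : R) *
        x ^ (n - i) * y ^ (k - i) * (x * y + z) ^ (i + 1)
      = z * ((n.choose i : R) * (k.choose i : R) *
          x ^ (n - i) * y ^ (k - i) * (x * y + z) ^ i)
        + x * ((n.choose (i + 1) : R) * ((k + 1).choose (i + 1) : R) *
          x ^ (n - (i + 1)) * y ^ (k - i) * (x * y + z) ^ (i + 1))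
        + y * (((n + 1).choose (i + 1) : R) * (k.choose (i + 1) : R) *
          x ^ (n - i) * y ^ (k - (i + 1)) * (x * y + z) ^ (i + 1))
        + (t i - t (i + 1)) := by
    intro i hi
    have hin : i ≤ n := Nat.lt_succ_iff.mp (mem_range.mp hi)
    simp only [ht]
    rcases Nat.lt_or_ge k i with hki | hki
    · -- k < i : all binomials with lower index ≥ i vanish
      have c1 : k.choose i = 0 := Nat.choose_eq_zero_of_lt hki
      have c2 : k.choose (i + 1) = 0 := Nat.choose_eq_zero_of_lt (by omega)
      have c3 : (k + 1).choose (i + 1) = 0 := Nat.choose_eq_zero_of_lt (by omega)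
      simp [c1, c2, c3]
    · rcases Nat.eq_or_lt_of_le hki with rfl | hk2
      · -- k = i
        have c2 : i.choose (i + 1) = 0 := Nat.choose_succ_self i
        rcases Nat.eq_or_lt_of_le hin with rfl | hlt
        · -- n = i as well
          simp only [c2, Nat.choose_self, Nat.sub_self, show i + 1 - i = 1 by omega,
            show i - (i + 1) = 0 by omega, Nat.cast_one, Nat.cast_zero]
          ring
        · obtain ⟨a, rfl⟩ : ∃ a, n = i + 1 + a := ⟨n - (i + 1), by omega⟩
          simp only [Nat.choose_succ_succ, Nat.choose_self, c2,
            show i + 1 + a - i = a + 1 by omega, show i + 1 + a - (i + 1) = a by omega,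
            show i + 1 + a + 1 - i = a + 2 by omega,
            show i + 1 + a + 1 - (i + 1) = a + 1 by omega,
            Nat.sub_self, show i + 1 - i = 1 by omega, show i - (i + 1) = 0 by omega]
          push_cast
          ring
      · -- i < k
        obtain ⟨b, rfl⟩ : ∃ b, k = i + 1 + b := ⟨k - (i + 1), by omega⟩
        rcases Nat.eq_or_lt_of_le hin with rfl | hlt
        · -- n = i
          have c2 : i.choose (i + 1) = 0 := Nat.choose_succ_self i
          simp only [Nat.choose_succ_succ, Nat.choose_self, c2, Nat.sub_self,
            show i + 1 + b - i = b + 1 by omega, show i + 1 + b - (i + 1) = b by omega,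
            show i + 1 + b + 1 - i = b + 2 by omega,
            show i + 1 + b + 1 - (i + 1) = b + 1 by omega,
            show i + 1 - i = 1 by omega, show i - (i + 1) = 0 by omega]
          push_cast
          ring
        · obtain ⟨a, rfl⟩ : ∃ a, n = i + 1 + a := ⟨n - (i + 1), by omega⟩
          simp only [Nat.choose_succ_succ,
            show i + 1 + a - i = a + 1 by omega, show i + 1 + a - (i + 1) = a by omega,
            show i + 1 + a + 1 - i = a + 2 by omega,
            show i + 1 + a + 1 - (i + 1) = a + 1 by omega,
            show i + 1 + b - i = b + 1 by omega, show i + 1 + b - (i + 1) = b by omega,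
            show i + 1 + b + 1 - i = b + 2 by omega,
            show i + 1 + b + 1 - (i + 1) = b + 1 by omega]
          push_cast
          ring
  have hsum : ∑ i ∈ range (n + 1),
      ((n + 1).choose (i + 1) : R) * ((k + 1).choose (i + 1) : R) *
        x ^ (n - i) * y ^ (k - i) * (x * y + z) ^ (i + 1)
      = (∑ i ∈ range (n + 1), z * ((n.choose i : R) * (k.choose i : R) *
          x ^ (n - i) * y ^ (k - i) * (x * y + z) ^ i))
        + (∑ i ∈ range (n + 1), x * ((n.choose (i + 1) : R) * ((k + 1).choose (i + 1) : R) *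
          x ^ (n - (i + 1)) * y ^ (k - i) * (x * y + z) ^ (i + 1)))
        + (∑ i ∈ range (n + 1), y * (((n + 1).choose (i + 1) : R) * (k.choose (i + 1) : R) *
          x ^ (n - i) * y ^ (k - (i + 1)) * (x * y + z) ^ (i + 1)))
        + (t 0 - t (n + 1)) := by
    rw [← Finset.sum_range_sub' t (n + 1), ← Finset.sum_add_distrib, ← Finset.sum_add_distrib,
      ← Finset.sum_add_distrib]
    exact Finset.sum_congr rfl hpoint
  have ht0 : t 0 = x ^ (n + 1) * y ^ (k + 1) := by simp [ht]
  have htn : t (n + 1) = 0 := by simp [ht, Nat.choose_succ_self]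
  rw [hL, hZ, hX, hY, hsum, ht0, htn]
  ring

theorem weighted_delannoy_recurrence {R : Type*} [CommRing R] (x y z : R) :
    (∀ n k : ℕ, 1 ≤ n → 1 ≤ k →
      wtDel x y z n k =
        z * wtDel x y z (n - 1) (k - 1) + x * wtDel x y z (n - 1) k +
          y * wtDel x y z n (k - 1)) ∧
    (∀ n : ℕ, wtDel x y z n 0 = x ^ n) ∧
    (∀ k : ℕ, wtDel x y z 0 k = y ^ k) := by
  refine ⟨?_, ?_, ?_⟩
  · rintro (_ | n) (_ | k) hn hk
    · omega
    · omega
    · omega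
    · simpa using wtDel_succ_succ x y z n k
  · intro n
    unfold wtDel
    rw [Finset.sum_eq_single 0]
    · simp
    · intro i _ h0
      simp [Nat.choose_eq_zero_of_lt (Nat.pos_of_ne_zero h0)]
    · simp
  · intro k
    unfold wtDel
    simp
end

section
/- The number of lattice paths from (0,0) to (n,k) in ℤ² using steps (1,0), (0,1), and (1,1) equals the Delannoy number d_{n,k} = Σ_{i=0}^{n} C(n,i)·C(k,i)·2^{i}. -/
/-!
A nonempty path is determined by its first step and the path that follows it, so the number
of paths to `p ≠ 0` is the sum of the numbers of paths to `p - s` over the steps `s`. For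
Delannoy steps this is the recurrence `d(n+1,k+1) = d(n,k+1) + d(n+1,k) + d(n,k)` with
boundary values `1`, which the binomial sum also satisfies by Pascal's rule. Finiteness of
the path sets comes from the grading `x + y`, which every step increases.
-/

open Finset

def IsDelStep (s : ℤ × ℤ) : Prop := s = (1, 0) ∨ s = (0, 1) ∨ s = (1, 1)

section StepPaths

variable {G : Type*} [AddCommGroup G] (S : Finset G)

def stepPaths (p : G) : Set (List G) := {l | (∀ s ∈ l, s ∈ S) ∧ l.sum = p}

variable {S}

lemma length_nsmul_le_of_mem_stepPaths {p : G} {l : List G} (φ : G →+ ℤ) {c : ℤ}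
    (hS : ∀ s ∈ S, c ≤ φ s) (hl : l ∈ stepPaths S p) : l.length • c ≤ φ p := by
  obtain ⟨hlS, rfl⟩ := hl
  rw [map_list_sum, ← List.length_map φ]
  exact List.card_nsmul_le_sum _ _ (by simpa using fun s hs ↦ hS s (hlS s hs))

lemma stepPaths_eq_empty (φ : G →+ ℤ) (hS : ∀ s ∈ S, 0 ≤ φ s) {p : G} (hp : φ p < 0) :
    stepPaths S p = ∅ :=
  Set.eq_empty_of_forall_notMem fun _ hl ↦
    hp.not_ge (by simpa using length_nsmul_le_of_mem_stepPaths φ hS hl)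

lemma stepPaths_zero (φ : G →+ ℤ) (hS : ∀ s ∈ S, 1 ≤ φ s) : stepPaths S 0 = {[]} := by
  ext l
  refine ⟨fun hl ↦ ?_, ?_⟩
  · simpa using length_nsmul_le_of_mem_stepPaths φ hS hl
  · rintro rfl
    simp [stepPaths]

lemma stepPaths_finite (φ : G →+ ℤ) (hS : ∀ s ∈ S, 1 ≤ φ s) (p : G) :
    (stepPaths S p).Finite := by
  refine ((List.finite_length_le S (φ p).toNat).image (List.map (↑))).subset fun l hl ↦ ?_
  have hlen : l.length ≤ (φ p).toNat := by
    simpa using Int.toNat_le_toNat (length_nsmul_le_of_mem_stepPaths φ hS hl)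
  lift l to List S using hl.1
  exact ⟨l, by simpa using hlen, rfl⟩

lemma cons_mem_stepPaths {p s : G} (hs : s ∈ S) {t : List G} (ht : t ∈ stepPaths S (p - s)) :
    s :: t ∈ stepPaths S p :=
  ⟨List.forall_mem_cons.2 ⟨hs, ht.1⟩, by rw [List.sum_cons, ht.2, add_sub_cancel]⟩

variable (S) in
def consStep (p : G) : (Σ s : S, stepPaths S (p - s)) → stepPaths S p :=
  fun ⟨s, t⟩ ↦ ⟨s :: t, cons_mem_stepPaths s.2 t.2⟩

lemma consStep_bijective {p : G} (hp : p ≠ 0) : Function.Bijective (consStep S p) := by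
  constructor
  · rintro ⟨⟨s, hs⟩, ⟨t, ht⟩⟩ ⟨⟨s', hs'⟩, ⟨t', ht'⟩⟩ h
    obtain ⟨rfl, rfl⟩ := List.cons.inj (congrArg Subtype.val h)
    rfl
  · rintro ⟨_ | ⟨s, t⟩, hl, rfl⟩
    · exact absurd rfl hp
    · rw [List.forall_mem_cons] at hl
      exact ⟨⟨⟨s, hl.1⟩, ⟨t, hl.2, by rw [List.sum_cons, add_sub_cancel_left]⟩⟩, rfl⟩

lemma card_stepPaths_eq_sum {p : G} (hp : p ≠ 0) (hfin : ∀ q, (stepPaths S q).Finite) :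
    Nat.card (stepPaths S p) = ∑ s ∈ S, Nat.card (stepPaths S (p - s)) := by
  have := fun q ↦ (hfin q).to_subtype
  rw [← Nat.card_eq_of_bijective _ (consStep_bijective hp), Nat.card_sigma,
    sum_coe_sort S fun s ↦ Nat.card (stepPaths S (p - s))]

end StepPaths

def delannoy (n k : ℕ) : ℕ := ∑ i ∈ range (n + 1), n.choose i * k.choose i * 2 ^ i

lemma delannoy_zero_left (k : ℕ) : delannoy 0 k = 1 := by
  simp [delannoy]

lemma delannoy_zero_right (n : ℕ) : delannoy n 0 = 1 := by
  simp [delannoy, sum_range_succ']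

lemma delannoy_succ_left (n m : ℕ) :
    delannoy (n + 1) m =
      delannoy n m + ∑ i ∈ range (n + 1), n.choose i * m.choose (i + 1) * 2 ^ (i + 1) := by
  have hpad : delannoy n m = ∑ i ∈ range (n + 2), n.choose i * m.choose i * 2 ^ i := by
    simp [delannoy, sum_range_succ _ (n + 1)]
  rw [hpad, delannoy, sum_range_succ', sum_range_succ' _ (n + 1)]
  simp only [Nat.choose_succ_succ', Nat.choose_zero_right, add_mul, sum_add_distrib]
  ring

lemma delannoy_succ_succ (n k : ℕ) :
    delannoy (n + 1) (k + 1) = delannoy n (k + 1) + delannoy (n + 1) k + delannoy n k := by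
  have h : ∑ i ∈ range (n + 1), n.choose i * (k + 1).choose (i + 1) * 2 ^ (i + 1) =
      2 * delannoy n k + ∑ i ∈ range (n + 1), n.choose i * k.choose (i + 1) * 2 ^ (i + 1) := by
    simp only [delannoy, Nat.choose_succ_succ', mul_add, add_mul, sum_add_distrib, mul_sum]
    congr 1
    exact sum_congr rfl fun i _ ↦ by ring
  rw [delannoy_succ_left n (k + 1), delannoy_succ_left n k, h]
  ring

def delannoySteps : Finset (ℤ × ℤ) := {(1, 0), (0, 1), (1, 1)}

lemma isDelStep_iff_mem_delannoySteps (s : ℤ × ℤ) : IsDelStep s ↔ s ∈ delannoySteps := by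
  simp [IsDelStep, delannoySteps]

lemma one_le_fst_add_snd_of_mem_delannoySteps :
    ∀ s ∈ delannoySteps, 1 ≤ (AddMonoidHom.fst ℤ ℤ + AddMonoidHom.snd ℤ ℤ) s := by
  simp [delannoySteps]

noncomputable def delannoyPathCount (p : ℤ × ℤ) : ℕ := Nat.card (stepPaths delannoySteps p)

lemma delannoyPathCount_of_fst_neg {p : ℤ × ℤ} (hp : p.1 < 0) : delannoyPathCount p = 0 := by
  rw [delannoyPathCount, stepPaths_eq_empty (AddMonoidHom.fst ℤ ℤ) (by simp [delannoySteps]) hp]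
  exact Nat.card_of_isEmpty

lemma delannoyPathCount_of_snd_neg {p : ℤ × ℤ} (hp : p.2 < 0) : delannoyPathCount p = 0 := by
  rw [delannoyPathCount, stepPaths_eq_empty (AddMonoidHom.snd ℤ ℤ) (by simp [delannoySteps]) hp]
  exact Nat.card_of_isEmpty

lemma delannoyPathCount_zero : delannoyPathCount 0 = 1 := by
  rw [delannoyPathCount, stepPaths_zero _ one_le_fst_add_snd_of_mem_delannoySteps]
  exact Nat.card_unique

lemma delannoyPathCount_eq_add {a b : ℤ} (h : (a, b) ≠ 0) :
    delannoyPathCount (a, b) = delannoyPathCount (a - 1, b) + delannoyPathCount (a, b - 1) +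
      delannoyPathCount (a - 1, b - 1) := by
  rw [delannoyPathCount, card_stepPaths_eq_sum h
    (stepPaths_finite _ one_le_fst_add_snd_of_mem_delannoySteps)]
  simp [delannoySteps, delannoyPathCount, add_assoc]

lemma delannoyPathCount_natCast (n k : ℕ) : delannoyPathCount (n, k) = delannoy n k := by
  induction n generalizing k with
  | zero =>
    induction k with
    | zero => rw [Nat.cast_zero, Prod.mk_zero_zero, delannoyPathCount_zero, delannoy_zero_left]
    | succ k ih =>
      rw [delannoyPathCount_eq_add (by simp; omega)]
      simpa [delannoyPathCount_of_fst_neg, delannoy_zero_left] using ih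
  | succ n ihn =>
    induction k with
    | zero =>
      rw [delannoyPathCount_eq_add (by simp; omega)]
      simpa [delannoyPathCount_of_snd_neg, delannoy_zero_right] using ihn 0
    | succ k ihk =>
      rw [delannoyPathCount_eq_add (by simp; omega), delannoy_succ_succ, ← ihn, ← ihk, ← ihn]
      push_cast
      simp only [add_sub_cancel_right]

theorem count_delannoy_paths (n k : ℕ) :
    Nat.card {l : List (ℤ × ℤ) //
        (∀ s ∈ l, IsDelStep s) ∧ l.sum = ((n : ℤ), (k : ℤ))} =
      ∑ i ∈ Finset.range (n + 1), n.choose i * k.choose i * 2 ^ i := by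
  simp_rw [isDelStep_iff_mem_delannoySteps]
  exact delannoyPathCount_natCast n k
end

section
/- Lindström–Gessel–Viennot identity (general form): for a finite directed acyclic graph G with edge weights in a commutative ring, and vertex sequences u₁,…,uₙ and v₁,…,vₙ, one has Σ_{π ∈ Sₙ} sgn(π) · (total weight of n-tuples of pairwise vertex-disjoint paths (p₁,…,pₙ) with pᵢ from uᵢ to v_{π(i)}) = det(h(uᵢ,vⱼ))_{i,j=1}^{n}, where h(u,v) is the total weight of all paths from u to v. -/
open Finset

/-- `l` is (the list of vertices of) a directed path from `u` to `v` in the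
directed graph with adjacency relation `Adj`. -/
def IsDirPath {V : Type*} (Adj : V → V → Prop) (u v : V) (l : List V) : Prop :=
  l.Chain' Adj ∧ l.head? = some u ∧ l.getLast? = some v

/-- The weight of a path, given as a list of vertices: the product of the
weights of its edges. -/
def listWt {V R : Type*} [CommRing R] (w : V → V → R) (l : List V) : R :=
  ((l.zip l.tail).map fun ab => w ab.1 ab.2).prod

/-!
Expand the determinant as a signed sum over all systems of paths `P i : u i → v (σ i)`. The
intersecting systems cancel in pairs: take an index `i` whose path meets another one, the first
vertex `x` of `P i` lying on another path, and an index `j ≠ i` with `x ∈ P j`; exchanging the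
tails of `P i` and `P j` from `x` on preserves the weight and multiplies `σ` by the transposition
`(i j)`. The exchange changes neither which paths meet another one nor the part of `P i` before
`x`, so it reproduces the same `i`, `x`, `j` and is an involution. Acyclicity makes every path
vertex-simple: the path sets are finite, and the new `P j`, which ends with the old tail of `P i`,
cannot meet the part of `P i` before `x`.
-/

section

variable {V : Type*}

theorem List.IsChain.nodup_of_acyclic {Adj : V → V → Prop}
    (hacyc : ∀ a, ¬ Relation.TransGen Adj a a) {l : List V} (hl : l.IsChain Adj) : l.Nodup :=
  have : Std.Irrefl (Relation.TransGen Adj) := ⟨hacyc⟩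
  (List.isChain_iff_pairwise.1 (hl.imp fun _ _ => Relation.TransGen.single)).nodup

theorem finite_setOf_isDirPath [Finite V] {Adj : V → V → Prop}
    (hacyc : ∀ a, ¬ Relation.TransGen Adj a a) (a b : V) :
    {l : List V | IsDirPath Adj a b l}.Finite :=
  have := Fintype.ofFinite V
  (List.finite_length_le V (Fintype.card V)).subset fun _ hl =>
    (List.IsChain.nodup_of_acyclic hacyc hl.1).length_le_card

theorem listWt_append_cons {R : Type*} [CommRing R] (w : V → V → R) (s : List V) (x : V)
    (t : List V) : listWt w (s ++ x :: t) = listWt w (s ++ [x]) * listWt w (x :: t) := by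
  induction s with
  | nil => simp [listWt]
  | cons y s ih =>
    cases s with
    | nil => simp [listWt]
    | cons z s => simp_all [listWt, mul_assoc]

section Splice

variable [DecidableEq V]

-- `l` up to its first `x`, then `l'` from its first `x` on; all of `l` when `x ∉ l`.
def spliceAt (x : V) (l l' : List V) : List V := l.take (l.idxOf x) ++ l'.drop (l'.idxOf x)

theorem spliceAt_self (x : V) (l : List V) : spliceAt x l l = l :=
  List.take_append_drop _ _

theorem spliceAt_append_cons {x : V} {s t s' t' : List V} (hs : x ∉ s) (hs' : x ∉ s') :
    spliceAt x (s ++ x :: t) (s' ++ x :: t') = s ++ x :: t' := by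
  simp [spliceAt, List.idxOf_append_of_notMem hs, List.idxOf_append_of_notMem hs']

theorem mem_or_mem_of_mem_spliceAt {x y : V} {l l' : List V} (hy : y ∈ spliceAt x l l') :
    y ∈ l ∨ y ∈ l' :=
  (List.mem_append.1 hy).imp (List.mem_of_mem_take ·) (List.mem_of_mem_drop ·)

variable {x : V} {l l' : List V}

theorem spliceAt_spliceAt (hl : x ∈ l) (hl' : x ∈ l') :
    spliceAt x (spliceAt x l l') (spliceAt x l' l) = l := by
  obtain ⟨s, t, hs, rfl, -⟩ := List.exists_erase_eq hl
  obtain ⟨s', t', hs', rfl, -⟩ := List.exists_erase_eq hl'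
  rw [spliceAt_append_cons hs hs', spliceAt_append_cons hs' hs, spliceAt_append_cons hs hs']

theorem self_mem_spliceAt (hl' : x ∈ l') : x ∈ spliceAt x l l' := by
  obtain ⟨s', t', hs', rfl, -⟩ := List.exists_erase_eq hl'
  simp [spliceAt, List.idxOf_append_of_notMem hs']

theorem isDirPath_spliceAt {Adj : V → V → Prop} {a b a' b' : V} (hp : IsDirPath Adj a b l)
    (hp' : IsDirPath Adj a' b' l') (hl : x ∈ l) (hl' : x ∈ l') :
    IsDirPath Adj a b' (spliceAt x l l') := by
  obtain ⟨s, t, hs, rfl, -⟩ := List.exists_erase_eq hl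
  obtain ⟨s', t', hs', rfl, -⟩ := List.exists_erase_eq hl'
  obtain ⟨hc, ha, -⟩ := hp
  obtain ⟨hc', -, hb'⟩ := hp'
  rw [spliceAt_append_cons hs hs']
  refine ⟨?_, ?_, ?_⟩
  · show List.IsChain Adj _
    have h₁ : (s ++ [x]).IsChain Adj := List.IsChain.prefix hc ⟨t, by simp⟩
    have h₂ : ([x] ++ t').IsChain Adj := List.IsChain.right_of_append (l₁ := s') hc'
    simpa using h₁.append_overlap h₂ (List.cons_ne_nil _ _)
  · cases s <;> simpa using ha
  · simpa using hb'

theorem listWt_spliceAt_mul_listWt_spliceAt {R : Type*} [CommRing R] (w : V → V → R)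
    (hl : x ∈ l) (hl' : x ∈ l') :
    listWt w (spliceAt x l l') * listWt w (spliceAt x l' l) = listWt w l * listWt w l' := by
  obtain ⟨s, t, hs, rfl, -⟩ := List.exists_erase_eq hl
  obtain ⟨s', t', hs', rfl, -⟩ := List.exists_erase_eq hl'
  rw [spliceAt_append_cons hs hs', spliceAt_append_cons hs' hs, listWt_append_cons w s x t',
    listWt_append_cons w s' x t, listWt_append_cons w s x t, listWt_append_cons w s' x t']
  ring

end Splice

theorem Exists.choose_congr {α : Sort*} {p q : α → Prop} (hpq : ∀ a, p a ↔ q a)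
    (hp : ∃ a, p a) (hq : ∃ a, q a) : hp.choose = hq.choose := by
  obtain rfl : p = q := funext fun a => propext (hpq a)
  rfl

section PathSystems

variable {ι : Type*} {P : ι → List V} {i j k : ι} {x y : V}

def OnOtherPath (P : ι → List V) (i : ι) (y : V) : Prop := ∃ j ≠ i, y ∈ P j

def Meets (P : ι → List V) (i : ι) : Prop := ∃ y ∈ P i, OnOtherPath P i y

def Intersecting (P : ι → List V) : Prop := ∃ i, Meets P i

theorem not_intersecting_iff :
    ¬ Intersecting P ↔ ∀ i j, i ≠ j → ∀ y : V, ¬(y ∈ P i ∧ y ∈ P j) := by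
  simp only [Intersecting, Meets, OnOtherPath]
  grind

variable [DecidableEq ι]

theorem swap_apply_eq_self_or_mem (hi : x ∈ P i) (hj : x ∈ P j) (k : ι) :
    Equiv.swap i j k = k ∨ x ∈ P k ∧ x ∈ P (Equiv.swap i j k) := by
  rcases eq_or_ne k i with rfl | hki
  · simp [hi, hj]
  rcases eq_or_ne k j with rfl | hkj
  · simp [hi, hj]
  exact .inl (Equiv.swap_apply_of_ne_of_ne hki hkj)

variable [DecidableEq V]

def swapTails (P : ι → List V) (i j : ι) (x : V) (k : ι) : List V :=
  spliceAt x (P k) (P (Equiv.swap i j k))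

theorem swapTails_apply_left : swapTails P i j x i = spliceAt x (P i) (P j) := by
  simp [swapTails]

theorem swapTails_apply_right : swapTails P i j x j = spliceAt x (P j) (P i) := by
  simp [swapTails]

theorem swapTails_apply_of_ne (hi : k ≠ i) (hj : k ≠ j) : swapTails P i j x k = P k := by
  rw [swapTails, Equiv.swap_apply_of_ne_of_ne hi hj, spliceAt_self]

theorem self_mem_swapTails_left (hj : x ∈ P j) : x ∈ swapTails P i j x i := by
  rw [swapTails_apply_left]
  exact self_mem_spliceAt hj

theorem self_mem_swapTails_right (hi : x ∈ P i) : x ∈ swapTails P i j x j := by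
  rw [swapTails_apply_right]
  exact self_mem_spliceAt hi

theorem mem_or_mem_of_mem_swapTails (h : y ∈ swapTails P i j x k) :
    y ∈ P k ∨ y ∈ P (Equiv.swap i j k) :=
  mem_or_mem_of_mem_spliceAt h

theorem swapTails_swapTails (hi : x ∈ P i) (hj : x ∈ P j) :
    swapTails (swapTails P i j x) i j x = P := by
  funext k
  rcases swap_apply_eq_self_or_mem hi hj k with hk | ⟨hk, hk'⟩
  · simp only [swapTails, hk, spliceAt_self]
  · simp only [swapTails, Equiv.swap_apply_self]
    exact spliceAt_spliceAt hk hk'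

theorem isDirPath_swapTails {Adj : V → V → Prop} {u v : ι → V} {σ : Equiv.Perm ι}
    (hP : ∀ k, IsDirPath Adj (u k) (v (σ k)) (P k)) (hi : x ∈ P i) (hj : x ∈ P j) (k : ι) :
    IsDirPath Adj (u k) (v ((σ * Equiv.swap i j) k)) (swapTails P i j x k) := by
  rcases swap_apply_eq_self_or_mem hi hj k with hk | ⟨hk, hk'⟩
  · simpa [swapTails, hk, spliceAt_self] using hP k
  · exact isDirPath_spliceAt (hP k) (hP _) hk hk'

theorem prod_listWt_swapTails [Fintype ι] {R : Type*} [CommRing R] (w : V → V → R)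
    (hi : x ∈ P i) (hj : x ∈ P j) :
    ∏ k, listWt w (swapTails P i j x k) = ∏ k, listWt w (P k) := by
  rcases eq_or_ne i j with rfl | hij
  · simp [swapTails, spliceAt_self]
  rw [← prod_compl_mul_prod {i, j}, ← prod_compl_mul_prod {i, j} (fun k => listWt w (P k)),
    prod_pair hij, prod_pair hij, swapTails_apply_left, swapTails_apply_right,
    listWt_spliceAt_mul_listWt_spliceAt w hi hj]
  congr 1
  refine prod_congr rfl fun k hk => ?_
  simp only [mem_compl, mem_insert, mem_singleton, not_or] at hk
  rw [swapTails_apply_of_ne hk.1 hk.2]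

theorem onOtherPath_of_onOtherPath_swapTails (hki : k ≠ i) (hkj : k ≠ j)
    (h : OnOtherPath (swapTails P i j x) k y) : OnOtherPath P k y := by
  obtain ⟨m, hmk, hy⟩ := h
  refine (mem_or_mem_of_mem_swapTails hy).elim (fun hy => ⟨m, hmk, hy⟩)
    fun hy => ⟨_, ?_, hy⟩
  rw [← Equiv.swap_apply_of_ne_of_ne hki hkj]
  exact (Equiv.swap i j).injective.ne hmk

theorem meets_of_meets_swapTails (hi : x ∈ P i) (hj : x ∈ P j) (hij : i ≠ j)
    (h : Meets (swapTails P i j x) k) : Meets P k := by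
  rcases eq_or_ne k i with rfl | hki
  · exact ⟨x, hi, j, hij.symm, hj⟩
  rcases eq_or_ne k j with rfl | hkj
  · exact ⟨x, hj, i, hij, hi⟩
  obtain ⟨y, hy, hyo⟩ := h
  rw [swapTails_apply_of_ne hki hkj] at hy
  exact ⟨y, hy, onOtherPath_of_onOtherPath_swapTails hki hkj hyo⟩

theorem meets_swapTails_iff (hi : x ∈ P i) (hj : x ∈ P j) (hij : i ≠ j) :
    Meets (swapTails P i j x) k ↔ Meets P k := by
  refine ⟨meets_of_meets_swapTails hi hj hij, fun h => ?_⟩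
  rw [← swapTails_swapTails hi hj] at h
  exact meets_of_meets_swapTails (self_mem_swapTails_left hj) (self_mem_swapTails_right hi) hij h

end PathSystems

section CanonicalSwap

variable {ι : Type*} {P : ι → List V}

-- `Classical.choose` depends only on the predicate, so the choices below survive `tailSwap`
-- as soon as the predicates do.
noncomputable def meetIdx (P : ι → List V) (h : Intersecting P) : ι := h.choose

theorem meets_meetIdx (h : Intersecting P) : Meets P (meetIdx P h) := h.choose_spec

open scoped Classical in
noncomputable def meetVertex (P : ι → List V) (h : Intersecting P) : V :=
  ((P (meetIdx P h)).find? (OnOtherPath P (meetIdx P h) ·)).get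
    (by simpa [Meets] using meets_meetIdx h)

theorem meetVertex_spec (h : Intersecting P) :
    OnOtherPath P (meetIdx P h) (meetVertex P h) ∧
      ∃ s t, P (meetIdx P h) = s ++ meetVertex P h :: t ∧
        ∀ a ∈ s, ¬ OnOtherPath P (meetIdx P h) a := by
  classical
  have hfind : (P (meetIdx P h)).find? (OnOtherPath P (meetIdx P h) ·) = some (meetVertex P h) :=
    (Option.some_get _).symm
  simpa using List.find?_eq_some_iff_append.1 hfind

theorem meetVertex_eq {h : Intersecting P} {i : ι} (hi : meetIdx P h = i) {y : V} {s t : List V}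
    (hy : OnOtherPath P i y) (hP : P i = s ++ y :: t) (hs : ∀ a ∈ s, ¬ OnOtherPath P i a) :
    meetVertex P h = y := by
  classical
  subst hi
  have : (P (meetIdx P h)).find? (OnOtherPath P (meetIdx P h) ·) = some y :=
    List.find?_eq_some_iff_append.2 ⟨by simpa using hy, s, t, hP, by simpa using hs⟩
  simp [meetVertex, this]

noncomputable def partnerIdx (P : ι → List V) (h : Intersecting P) : ι :=
  (meetVertex_spec h).1.choose

theorem partnerIdx_ne_meetIdx (h : Intersecting P) : partnerIdx P h ≠ meetIdx P h :=
  (meetVertex_spec h).1.choose_spec.1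

theorem meetVertex_mem_partnerIdx (h : Intersecting P) : meetVertex P h ∈ P (partnerIdx P h) :=
  (meetVertex_spec h).1.choose_spec.2

theorem meetVertex_mem_meetIdx (h : Intersecting P) : meetVertex P h ∈ P (meetIdx P h) := by
  obtain ⟨-, s, t, hP, -⟩ := meetVertex_spec h
  simp [hP]

variable [DecidableEq ι] [DecidableEq V]

noncomputable def tailSwap (P : ι → List V) (h : Intersecting P) : ι → List V :=
  swapTails P (meetIdx P h) (partnerIdx P h) (meetVertex P h)

theorem intersecting_tailSwap (h : Intersecting P) : Intersecting (tailSwap P h) :=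
  ⟨meetIdx P h, meetVertex P h, self_mem_swapTails_left (meetVertex_mem_partnerIdx h),
    partnerIdx P h, partnerIdx_ne_meetIdx h, self_mem_swapTails_right (meetVertex_mem_meetIdx h)⟩

variable (h : Intersecting P) (h' : Intersecting (tailSwap P h))

theorem meetIdx_tailSwap : meetIdx (tailSwap P h) h' = meetIdx P h :=
  Exists.choose_congr (fun _ => meets_swapTails_iff (meetVertex_mem_meetIdx h)
    (meetVertex_mem_partnerIdx h) (partnerIdx_ne_meetIdx h).symm) h' h

theorem meetVertex_tailSwap (hnd : (P (meetIdx P h)).Nodup) :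
    meetVertex (tailSwap P h) h' = meetVertex P h := by
  obtain ⟨hx, s, t, hPi, hs⟩ := meetVertex_spec h
  obtain ⟨s', t', hs', hPj, -⟩ := List.exists_erase_eq (meetVertex_mem_partnerIdx h)
  have hxs : meetVertex P h ∉ s := fun hx' => hs _ hx' hx
  have hQi : tailSwap P h (meetIdx P h) = s ++ meetVertex P h :: t' := by
    rw [tailSwap, swapTails_apply_left, hPi, hPj, spliceAt_append_cons hxs hs']
  have hQj : tailSwap P h (partnerIdx P h) = s' ++ meetVertex P h :: t := by
    rw [tailSwap, swapTails_apply_right, hPi, hPj, spliceAt_append_cons hs' hxs]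
  refine meetVertex_eq (meetIdx_tailSwap h h')
    ⟨partnerIdx P h, partnerIdx_ne_meetIdx h, by simp [hQj]⟩ hQi ?_
  rintro a ha ⟨m, hm, haQ⟩
  rcases eq_or_ne m (partnerIdx P h) with rfl | hmj
  · rw [hQj] at haQ
    rcases List.mem_append.1 haQ with ha' | ha'
    · exact hs a ha ⟨_, hm, hPj ▸ List.mem_append_left _ ha'⟩
    · rw [hPi] at hnd
      exact List.disjoint_of_nodup_append hnd ha ha'
  · rw [tailSwap, swapTails_apply_of_ne hm hmj] at haQ
    exact hs a ha ⟨m, hm, haQ⟩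

theorem partnerIdx_tailSwap (hnd : (P (meetIdx P h)).Nodup) :
    partnerIdx (tailSwap P h) h' = partnerIdx P h := by
  refine Exists.choose_congr (fun j => ?_) _ _
  rw [meetIdx_tailSwap h h', meetVertex_tailSwap h h' hnd]
  rcases eq_or_ne j (partnerIdx P h) with rfl | hj
  · simp [partnerIdx_ne_meetIdx, meetVertex_mem_partnerIdx,
      tailSwap, self_mem_swapTails_right (meetVertex_mem_meetIdx h)]
  · refine and_congr_right fun hji => ?_
    rw [tailSwap, swapTails_apply_of_ne hji hj]

theorem tailSwap_tailSwap (hnd : (P (meetIdx P h)).Nodup) : tailSwap (tailSwap P h) h' = P := by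
  rw [tailSwap, meetIdx_tailSwap h h', partnerIdx_tailSwap h h' hnd, meetVertex_tailSwap h h' hnd,
    tailSwap, swapTails_swapTails (meetVertex_mem_meetIdx h) (meetVertex_mem_partnerIdx h)]

end CanonicalSwap

theorem Matrix.det_of_finset_sum {ι α R : Type*} [Fintype ι] [DecidableEq ι] [CommRing R]
    (S : ι → ι → Finset α) (f : α → R) :
    (Matrix.of fun i j => ∑ p ∈ S i j, f p).det =
      ∑ σ : Equiv.Perm ι, ((Equiv.Perm.sign σ : ℤ) : R) *
        ∑ P ∈ Fintype.piFinset (fun i => S i (σ i)), ∏ i, f (P i) := by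
  rw [← Matrix.det_transpose, Matrix.det_apply']
  simp [prod_univ_sum]

section PathSums

variable [Finite V] {Adj : V → V → Prop} (hacyc : ∀ a, ¬ Relation.TransGen Adj a a)

noncomputable def pathFinset (a b : V) : Finset (List V) :=
  (finite_setOf_isDirPath hacyc a b).toFinset

variable {hacyc} in
theorem mem_pathFinset {a b : V} {l : List V} :
    l ∈ pathFinset hacyc a b ↔ IsDirPath Adj a b l :=
  Set.Finite.mem_toFinset _

theorem finsum_mem_isDirPath {M : Type*} [AddCommMonoid M] (f : List V → M) (a b : V) :
    ∑ᶠ p ∈ {p | IsDirPath Adj a b p}, f p = ∑ p ∈ pathFinset hacyc a b, f p :=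
  finsum_mem_eq_finite_toFinset_sum _ _

variable {ι : Type*} [Fintype ι] [DecidableEq ι]

open scoped Classical in
theorem finsum_mem_disjoint_isDirPath {M : Type*} [AddCommMonoid M] (f : (ι → List V) → M)
    (a b : ι → V) :
    ∑ᶠ P ∈ {P : ι → List V | (∀ i, IsDirPath Adj (a i) (b i) (P i)) ∧
        ∀ i j, i ≠ j → ∀ x : V, ¬(x ∈ P i ∧ x ∈ P j)}, f P =
      ∑ P ∈ (Fintype.piFinset fun i => pathFinset hacyc (a i) (b i)).filter
          (¬ Intersecting ·), f P := by
  rw [← finsum_mem_coe_finset]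
  congr
  ext P
  simp [mem_pathFinset, not_intersecting_iff]

open scoped Classical in
theorem sum_sign_mul_sum_intersecting_eq_zero {R : Type*} [CommRing R] (w : V → V → R)
    (u v : ι → V) :
    ∑ σ : Equiv.Perm ι, ((Equiv.Perm.sign σ : ℤ) : R) *
      ∑ P ∈ (Fintype.piFinset fun i => pathFinset hacyc (u i) (v (σ i))).filter Intersecting,
        ∏ i, listWt w (P i) = 0 := by
  simp_rw [mul_sum]
  rw [sum_sigma']
  set S := univ.sigma fun σ : Equiv.Perm ι =>
    (Fintype.piFinset fun i => pathFinset hacyc (u i) (v (σ i))).filter Intersecting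
  have hS (x : Σ _ : Equiv.Perm ι, ι → List V) :
      x ∈ S ↔ (∀ i, IsDirPath Adj (u i) (v (x.1 i)) (x.2 i)) ∧ Intersecting x.2 := by
    simp [S, mem_pathFinset]
  refine sum_involution (fun x hx => ⟨x.1 * Equiv.swap (meetIdx x.2 ((hS x).1 hx).2)
    (partnerIdx x.2 ((hS x).1 hx).2), tailSwap x.2 ((hS x).1 hx).2⟩) ?_ ?_ ?_ ?_
  · rintro ⟨σ, P⟩ hx
    have h := ((hS _).1 hx).2
    rw [tailSwap,
      prod_listWt_swapTails w (meetVertex_mem_meetIdx h) (meetVertex_mem_partnerIdx h),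
      Equiv.Perm.sign_mul, Equiv.Perm.sign_swap (partnerIdx_ne_meetIdx h).symm]
    push_cast
    ring
  · rintro ⟨σ, P⟩ hx - heq
    have h := ((hS _).1 hx).2
    have : Equiv.swap (meetIdx P h) (partnerIdx P h) = 1 := mul_eq_left.1 (congrArg Sigma.fst heq)
    exact partnerIdx_ne_meetIdx h (Equiv.swap_eq_one_iff.1 this).symm
  · rintro ⟨σ, P⟩ hx
    obtain ⟨hP, h⟩ := (hS _).1 hx
    exact (hS _).2 ⟨isDirPath_swapTails hP (meetVertex_mem_meetIdx h)
      (meetVertex_mem_partnerIdx h), intersecting_tailSwap h⟩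
  · rintro ⟨σ, P⟩ hx
    obtain ⟨hP, h⟩ := (hS _).1 hx
    have hnd := List.IsChain.nodup_of_acyclic hacyc (hP (meetIdx P h)).1
    refine Sigma.ext ?_ (heq_of_eq (tailSwap_tailSwap h _ hnd))
    dsimp only
    rw [meetIdx_tailSwap, partnerIdx_tailSwap h _ hnd, mul_assoc, Equiv.swap_mul_self, mul_one]

end PathSums

end

/-- The Lindström–Gessel–Viennot identity, general form. -/
theorem lgv_general {V R : Type*} [Fintype V] [CommRing R]
    (Adj : V → V → Prop) (hacyc : ∀ a, ¬ Relation.TransGen Adj a a)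
    (w : V → V → R) (n : ℕ) (u v : Fin n → V) :
    (∑ π : Equiv.Perm (Fin n), ((Equiv.Perm.sign π : ℤ) : R) *
        ∑ᶠ P ∈ {P : Fin n → List V |
            (∀ i, IsDirPath Adj (u i) (v (π i)) (P i)) ∧
            ∀ i j, i ≠ j → ∀ x : V, ¬(x ∈ P i ∧ x ∈ P j)},
          ∏ i, listWt w (P i)) =
      Matrix.det (Matrix.of fun i j : Fin n =>
        ∑ᶠ p ∈ {p : List V | IsDirPath Adj (u i) (v j) p}, listWt w p) := by
  classical
  simp_rw [finsum_mem_isDirPath hacyc, Matrix.det_of_finset_sum,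
    finsum_mem_disjoint_isDirPath hacyc]
  conv_rhs => enter [2, σ, 2]; rw [← sum_filter_not_add_sum_filter _ Intersecting]
  simp_rw [mul_add, sum_add_distrib, sum_sign_mul_sum_intersecting_eq_zero, add_zero]
end

section
/- Lindström–Gessel–Viennot identity (compatible case): if additionally the vertex families U = (u₁,…,uₙ) and V = (v₁,…,vₙ) are compatible — meaning any path from uᵢ to v_k and any path from uⱼ to v_ℓ with i < j and k > ℓ must share a vertex — then the total weight of n-tuples of pairwise vertex-disjoint paths with pᵢ from uᵢ to vᵢ equals det(h(uᵢ,vⱼ))_{i,j=1}^{n}. -/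
/-!
Expanding the determinant gives a signed sum over pairs `(σ, P)` where `P k` is a path from
`u k` to `v (σ k)`. On the systems whose paths meet, exchanging tails at the least vertex visited
twice, between the two least-indexed paths through it, is a weight-preserving involution that
flips the sign of `σ`. It does not change how often each vertex is visited, so it picks the same
vertex and paths when applied again, and these terms cancel. Among vertex-disjoint systems
compatibility leaves only `σ = 1`: an inversion `i < j`, `σ j < σ i` would force the paths
`P i` and `P j` to meet.
-/

open Finset

namespace LGV

variable {V : Type*}

section TailSwap

variable [DecidableEq V]

def tailSwap (x : V) (p q : List V) : List V :=
  p.takeWhile (· ≠ x) ++ q.dropWhile (· ≠ x)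

theorem tailSwap_self (x : V) (p : List V) : tailSwap x p p = p :=
  List.takeWhile_append_dropWhile

theorem dropWhile_ne_eq_cons {x : V} {l : List V} (h : x ∈ l) :
    ∃ B, l.dropWhile (· ≠ x) = x :: B := by
  induction l with
  | nil => simp at h
  | cons a l ih =>
    by_cases hax : a = x
    · exact ⟨l, by simp [hax]⟩
    · simpa [hax] using ih (by simpa [Ne.symm hax] using h)

theorem takeWhile_dropWhile_ne (x : V) (l : List V) :
    (l.dropWhile (· ≠ x)).takeWhile (· ≠ x) = [] := by
  by_cases h : x ∈ l
  · obtain ⟨B, hB⟩ := dropWhile_ne_eq_cons h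
    rw [hB]; simp
  · rw [List.dropWhile_eq_nil_iff.mpr fun y hy => by simpa using ne_of_mem_of_not_mem hy h]
    rfl

theorem tailSwap_tailSwap (x : V) (p q : List V) :
    tailSwap x (tailSwap x p q) (tailSwap x q p) = p := by
  have hpre : ∀ l : List V, ∀ y ∈ l.takeWhile (· ≠ x), decide (y ≠ x) = true :=
    fun _ _ => List.mem_takeWhile_imp
  simp only [tailSwap, List.takeWhile_append_of_pos (hpre p), List.dropWhile_append_of_pos (hpre q),
    takeWhile_dropWhile_ne, List.dropWhile_idempotent, List.append_nil,
    List.takeWhile_append_dropWhile]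

theorem mem_tailSwap {x : V} (p : List V) {q : List V} (h : x ∈ q) : x ∈ tailSwap x p q := by
  obtain ⟨B, hB⟩ := dropWhile_ne_eq_cons h
  rw [tailSwap, hB]
  exact List.mem_append_right _ List.mem_cons_self

theorem exists_tailSwap_eq_append_cons {x : V} {p q : List V} (hp : x ∈ p) (hq : x ∈ q) :
    ∃ A B C D, p = A ++ x :: B ∧ q = C ++ x :: D ∧
      tailSwap x p q = A ++ x :: D ∧ tailSwap x q p = C ++ x :: B := by
  obtain ⟨B, hB⟩ := dropWhile_ne_eq_cons hp
  obtain ⟨D, hD⟩ := dropWhile_ne_eq_cons hq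
  refine ⟨p.takeWhile (· ≠ x), B, q.takeWhile (· ≠ x), D, ?_, ?_, ?_, ?_⟩ <;>
    simp only [tailSwap, ← hB, ← hD, List.takeWhile_append_dropWhile]

end TailSwap

section Paths

variable {Adj : V → V → Prop}

theorem _root_.IsDirPath.nodup (hacyc : ∀ a, ¬ Relation.TransGen Adj a a) {a b : V}
    {l : List V} (h : IsDirPath Adj a b l) : l.Nodup :=
  (List.isChain_iff_pairwise.mp (h.1.imp fun _ _ => Relation.TransGen.single)).imp
    fun {a _} hab => by rintro rfl; exact hacyc a hab

theorem finite_setOf_isDirPath [Fintype V] (hacyc : ∀ a, ¬ Relation.TransGen Adj a a)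
    (a b : V) : {l | IsDirPath Adj a b l}.Finite :=
  (List.finite_length_le V (Fintype.card V)).subset fun _ hl => (hl.nodup hacyc).length_le_card

theorem _root_.IsDirPath.append_cons {a b c d x : V} {A B C D : List V}
    (h₁ : IsDirPath Adj a b (A ++ x :: B)) (h₂ : IsDirPath Adj c d (C ++ x :: D)) :
    IsDirPath Adj a d (A ++ x :: D) := by
  obtain ⟨hc₁, hh₁, -⟩ := h₁
  obtain ⟨hc₂, -, hl₂⟩ := h₂
  refine ⟨?_, by cases A <;> simpa using hh₁, by simpa using hl₂⟩
  show List.IsChain Adj _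
  have hA : (A ++ [x]).IsChain Adj := hc₁.prefix ⟨B, by simp⟩
  have hD : (x :: D).IsChain Adj := hc₂.suffix ⟨C, rfl⟩
  have hAD : ((A ++ [x]) ++ D).IsChain Adj := by
    refine List.isChain_append.mpr ⟨hA, hD.tail, fun y hy z hz => ?_⟩
    obtain rfl : x = y := by simpa using hy
    exact (List.isChain_cons.mp hD).1 z hz
  simpa using hAD

theorem _root_.IsDirPath.tailSwap [DecidableEq V] {a b c d x : V} {p q : List V}
    (hp : IsDirPath Adj a b p) (hq : IsDirPath Adj c d q) (hxp : x ∈ p) (hxq : x ∈ q) :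
    IsDirPath Adj a d (tailSwap x p q) := by
  obtain ⟨A, B, C, D, rfl, rfl, h, -⟩ := exists_tailSwap_eq_append_cons hxp hxq
  exact h ▸ hp.append_cons hq

end Paths

section Weights

variable {R : Type*} [CommRing R] (w : V → V → R)

theorem listWt_append_cons (A : List V) (x : V) (B : List V) :
    listWt w (A ++ x :: B) = listWt w (A ++ [x]) * listWt w (x :: B) := by
  induction A with
  | nil => simp [listWt]
  | cons a A ih =>
    cases A with
    | nil => simp [listWt]
    | cons a' A' =>
      simp only [List.cons_append, listWt, List.tail_cons, List.zip_cons_cons, List.map_cons,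
        List.prod_cons] at *
      rw [ih, mul_assoc]

theorem listWt_tailSwap_mul [DecidableEq V] {x : V} {p q : List V} (hp : x ∈ p) (hq : x ∈ q) :
    listWt w (tailSwap x p q) * listWt w (tailSwap x q p) = listWt w p * listWt w q := by
  obtain ⟨A, B, C, D, rfl, rfl, h₁, h₂⟩ := exists_tailSwap_eq_append_cons hp hq
  rw [h₁, h₂, listWt_append_cons w A x D, listWt_append_cons w C x B,
    listWt_append_cons w A x B, listWt_append_cons w C x D]
  ring

end Weights

theorem _root_.Fintype.prod_eq_prod_of_pair_mul_eq {ι M : Type*} [Fintype ι] [DecidableEq ι]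
    [CommMonoid M] {f g : ι → M} {i j : ι} (hij : i ≠ j) (hpair : g i * g j = f i * f j)
    (hrest : ∀ k, k ≠ i → k ≠ j → g k = f k) : ∏ k, g k = ∏ k, f k := by
  have hj : j ∈ Finset.univ.erase i := Finset.mem_erase.mpr ⟨hij.symm, Finset.mem_univ j⟩
  rw [← Finset.mul_prod_erase _ g (Finset.mem_univ i), ← Finset.mul_prod_erase _ g hj,
    ← Finset.mul_prod_erase _ f (Finset.mem_univ i), ← Finset.mul_prod_erase _ f hj,
    ← mul_assoc, ← mul_assoc, hpair]
  congr 1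
  refine Finset.prod_congr rfl fun k hk => ?_
  rw [Finset.mem_erase, Finset.mem_erase] at hk
  exact hrest k hk.2.1 hk.1

variable {ι : Type*}

def VertexDisjoint (P : ι → List V) : Prop :=
  ∀ i j, i ≠ j → ∀ x : V, ¬(x ∈ P i ∧ x ∈ P j)

section VisitCount

variable [DecidableEq V] [Fintype ι] {i j : ι} {P : ι → List V} {y : V}

def visitCount (P : ι → List V) (y : V) : ℕ :=
  ∑ k, (P k).count y

theorem two_le_visitCount (hij : i ≠ j) (hi : y ∈ P i) (hj : y ∈ P j) :
    2 ≤ visitCount P y := by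
  classical
  calc 2 ≤ (P i).count y + (P j).count y :=
        Nat.add_le_add (List.count_pos_iff.mpr hi) (List.count_pos_iff.mpr hj)
    _ = ∑ k ∈ {i, j}, (P k).count y := (Finset.sum_pair (f := fun k => (P k).count y) hij).symm
    _ ≤ visitCount P y := Finset.sum_le_sum_of_subset (Finset.subset_univ _)

theorem exists_ne_of_two_le_visitCount (hnd : ∀ k, (P k).Nodup) (h : 2 ≤ visitCount P y) :
    ∃ i j, i ≠ j ∧ y ∈ P i ∧ y ∈ P j := by
  have hcard : visitCount P y = (Finset.univ.filter fun k => y ∈ P k).card := by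
    simp only [visitCount, List.Nodup.count (hnd _), Finset.sum_boole, Nat.cast_id]
  obtain ⟨i, hi, j, hj, hij⟩ := Finset.one_lt_card.mp (hcard ▸ h)
  exact ⟨i, j, hij, (Finset.mem_filter.mp hi).2, (Finset.mem_filter.mp hj).2⟩

end VisitCount

section SwapTails

variable [DecidableEq V] [DecidableEq ι]

def swapTails (x : V) (i j : ι) (P : ι → List V) : ι → List V :=
  fun k => tailSwap x (P k) (P (Equiv.swap i j k))

variable {x : V} {i j k : ι} {P : ι → List V}

theorem swapTails_swapTails (x : V) (i j : ι) (P : ι → List V) :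
    swapTails x i j (swapTails x i j P) = P := by
  funext k
  simp only [swapTails, Equiv.swap_apply_self, tailSwap_tailSwap]

theorem swapTails_apply_of_ne (hi : k ≠ i) (hj : k ≠ j) : swapTails x i j P k = P k := by
  rw [swapTails, Equiv.swap_apply_of_ne_of_ne hi hj, tailSwap_self]

theorem visitCount_swapTails [Fintype ι] (x : V) (i j : ι) (P : ι → List V) :
    visitCount (swapTails x i j P) = visitCount P := by
  funext y
  simp only [visitCount, swapTails, tailSwap, List.count_append, Finset.sum_add_distrib]
  rw [Equiv.sum_comp (Equiv.swap i j) fun k => ((P k).dropWhile (· ≠ x)).count y,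
    ← Finset.sum_add_distrib]
  simp only [← List.count_append, List.takeWhile_append_dropWhile]

end SwapTails

theorem exists_lt_forall_eq_or_le {α : Type*} [LinearOrder α] [WellFoundedLT α] {p : α → Prop}
    {a b : α} (hab : a ≠ b) (ha : p a) (hb : p b) :
    ∃ i j, i < j ∧ p i ∧ p j ∧ ∀ k, p k → k = i ∨ j ≤ k := by
  obtain ⟨i, hi, hmin⟩ := wellFounded_lt.has_min {k | p k} ⟨a, ha⟩
  have hne : ∃ c, p c ∧ c ≠ i := by
    by_cases hai : a = i
    · exact ⟨b, hb, hai ▸ hab.symm⟩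
    · exact ⟨a, ha, hai⟩
  obtain ⟨j, ⟨hj, hji⟩, hjmin⟩ := wellFounded_lt.has_min {k | p k ∧ k ≠ i} hne
  refine ⟨i, j, lt_of_le_of_ne (not_lt.mp (hmin j hj)) hji.symm, hi, hj, fun k hk => ?_⟩
  by_cases hki : k = i
  · exact Or.inl hki
  · exact Or.inr (not_lt.mp (hjmin k ⟨hk, hki⟩))

section Pivot

variable [LinearOrder V] [LinearOrder ι] [Fintype ι]

structure IsPivot (P : ι → List V) (x : V) (i j : ι) : Prop where
  lt : i < j
  mem_left : x ∈ P i
  mem_right : x ∈ P j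
  eq_or_le : ∀ k, x ∈ P k → k = i ∨ j ≤ k
  le_of_two_le_visitCount : ∀ y, 2 ≤ visitCount P y → x ≤ y

variable {P : ι → List V} {x x' : V} {i j i' j' : ι}

theorem IsPivot.unique (h : IsPivot P x i j) (h' : IsPivot P x' i' j') :
    x = x' ∧ i = i' ∧ j = j' := by
  obtain rfl : x = x' := le_antisymm
    (h.le_of_two_le_visitCount x' (two_le_visitCount h'.lt.ne h'.mem_left h'.mem_right))
    (h'.le_of_two_le_visitCount x (two_le_visitCount h.lt.ne h.mem_left h.mem_right))
  have hi : i = i' := by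
    rcases h.eq_or_le i' h'.mem_left with hi | hji
    · exact hi.symm
    rcases h'.eq_or_le i h.mem_left with hi' | hji'
    · exact hi'
    exact absurd ((h'.lt.trans_le hji').trans (h.lt.trans_le hji)) (lt_irrefl i')
  subst hi
  exact ⟨rfl, rfl, le_antisymm ((h.eq_or_le j' h'.mem_right).resolve_left h'.lt.ne')
    ((h'.eq_or_le j h.mem_right).resolve_left h.lt.ne')⟩

theorem exists_isPivot [WellFoundedLT V] (hnd : ∀ k, (P k).Nodup) (hP : ¬ VertexDisjoint P) :
    ∃ x i j, IsPivot P x i j := by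
  obtain ⟨a, b, hab, y, hya, hyb⟩ : ∃ a b, a ≠ b ∧ ∃ y, y ∈ P a ∧ y ∈ P b := by
    simpa [VertexDisjoint] using hP
  obtain ⟨x, hx, hxmin⟩ :=
    wellFounded_lt.has_min {y | 2 ≤ visitCount P y} ⟨y, two_le_visitCount hab hya hyb⟩
  obtain ⟨a, b, hab, hxa, hxb⟩ := exists_ne_of_two_le_visitCount hnd hx
  obtain ⟨i, j, hij, hi, hj, hk⟩ := exists_lt_forall_eq_or_le (p := (x ∈ P ·)) hab hxa hxb
  exact ⟨x, i, j, hij, hi, hj, hk, fun y hy => not_lt.mp (hxmin y hy)⟩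

theorem IsPivot.mem_swap_iff (h : IsPivot P x i j) (k : ι) :
    x ∈ P (Equiv.swap i j k) ↔ x ∈ P k := by
  rcases eq_or_ne k i with rfl | hki
  · simp [h.mem_left, h.mem_right]
  rcases eq_or_ne k j with rfl | hkj
  · simp [h.mem_left, h.mem_right]
  rw [Equiv.swap_apply_of_ne_of_ne hki hkj]

theorem IsPivot.isPivot_swapTails (h : IsPivot P x i j) : IsPivot (swapTails x i j P) x i j where
  lt := h.lt
  mem_left := mem_tailSwap (P i) ((h.mem_swap_iff i).mpr h.mem_left)
  mem_right := mem_tailSwap (P j) ((h.mem_swap_iff j).mpr h.mem_right)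
  eq_or_le k hk := by
    by_cases hki : k = i
    · exact Or.inl hki
    by_cases hkj : k = j
    · exact Or.inr hkj.ge
    rw [swapTails_apply_of_ne hki hkj] at hk
    exact h.eq_or_le k hk
  le_of_two_le_visitCount := by
    rw [visitCount_swapTails]
    exact h.le_of_two_le_visitCount

theorem IsPivot.prod_listWt_swapTails {R : Type*} [CommRing R] (w : V → V → R)
    (h : IsPivot P x i j) :
    ∏ k, listWt w (swapTails x i j P k) = ∏ k, listWt w (P k) := by
  refine Fintype.prod_eq_prod_of_pair_mul_eq h.lt.ne ?_
    fun k hki hkj => by rw [swapTails_apply_of_ne hki hkj]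
  simp only [swapTails, Equiv.swap_apply_left, Equiv.swap_apply_right]
  exact listWt_tailSwap_mul w h.mem_left h.mem_right

theorem IsPivot.isDirPath_swapTails {Adj : V → V → Prop} {u v : ι → V} {σ : Equiv.Perm ι}
    (h : IsPivot P x i j) (hP : ∀ k, IsDirPath Adj (u k) (v (σ k)) (P k)) (k : ι) :
    IsDirPath Adj (u k) (v ((σ * Equiv.swap i j) k)) (swapTails x i j P k) := by
  by_cases hx : x ∈ P k
  · exact (hP k).tailSwap (hP _) hx ((h.mem_swap_iff k).mpr hx)
  have hki : k ≠ i := by rintro rfl; exact hx h.mem_left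
  have hkj : k ≠ j := by rintro rfl; exact hx h.mem_right
  rw [swapTails_apply_of_ne hki hkj, Equiv.Perm.mul_apply, Equiv.swap_apply_of_ne_of_ne hki hkj]
  exact hP k

theorem IsPivot.not_vertexDisjoint_swapTails (h : IsPivot P x i j) :
    ¬ VertexDisjoint (swapTails x i j P) := fun hd =>
  hd i j h.lt.ne x ⟨h.isPivot_swapTails.mem_left, h.isPivot_swapTails.mem_right⟩

open Classical in
noncomputable def pivotFlip (a : Σ _ : Equiv.Perm ι, ι → List V) :
    Σ _ : Equiv.Perm ι, ι → List V :=
  if h : ∃ t : V × ι × ι, IsPivot a.2 t.1 t.2.1 t.2.2 then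
    ⟨a.1 * Equiv.swap h.choose.2.1 h.choose.2.2,
      swapTails h.choose.1 h.choose.2.1 h.choose.2.2 a.2⟩
  else a

theorem IsPivot.pivotFlip_eq (h : IsPivot P x i j) (σ : Equiv.Perm ι) :
    pivotFlip ⟨σ, P⟩ = ⟨σ * Equiv.swap i j, swapTails x i j P⟩ := by
  have hex : ∃ t : V × ι × ι, IsPivot P t.1 t.2.1 t.2.2 := ⟨(x, i, j), h⟩
  obtain ⟨hx, hi, hj⟩ := hex.choose_spec.unique h
  rw [pivotFlip, dif_pos hex, hx, hi, hj]

theorem IsPivot.pivotFlip_pivotFlip (h : IsPivot P x i j) (σ : Equiv.Perm ι) :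
    pivotFlip (pivotFlip ⟨σ, P⟩) = ⟨σ, P⟩ := by
  rw [h.pivotFlip_eq, h.isPivot_swapTails.pivotFlip_eq, Equiv.mul_swap_mul_self,
    swapTails_swapTails]

end Pivot

section Cancellation

variable {R : Type*} [Fintype ι] [LinearOrder ι] [CommRing R] {Adj : V → V → Prop}
  {paths : V → V → Finset (List V)}

open Classical in
theorem sum_sign_smul_prod_listWt_not_vertexDisjoint_eq_zero
    (hacyc : ∀ a, ¬ Relation.TransGen Adj a a)
    (hpaths : ∀ a b p, p ∈ paths a b ↔ IsDirPath Adj a b p) (w : V → V → R)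
    (u v : ι → V) :
    ∑ σ : Equiv.Perm ι, ∑ P ∈ (Fintype.piFinset fun k => paths (u k) (v (σ k))).filter
      (¬ VertexDisjoint ·), Equiv.Perm.sign σ • ∏ k, listWt w (P k) = 0 := by
  -- any well-order of `V` can serve to choose the pivot vertex
  let _ : LinearOrder V := WellOrderingRel.isWellOrder.linearOrder
  have : WellFoundedLT V := ⟨WellOrderingRel.isWellOrder.wf⟩
  rw [Finset.sum_sigma']
  set s := Finset.univ.sigma fun σ : Equiv.Perm ι =>
    (Fintype.piFinset fun k => paths (u k) (v (σ k))).filter (¬ VertexDisjoint ·)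
  have hs : ∀ a, a ∈ s ↔
      (∀ k, IsDirPath Adj (u k) (v (a.1 k)) (a.2 k)) ∧ ¬ VertexDisjoint a.2 := by
    simp [s, Fintype.mem_piFinset, hpaths]
  have hpivot : ∀ σ P, ⟨σ, P⟩ ∈ s → ∃ x i j, IsPivot P x i j := fun σ P h =>
    exists_isPivot (fun k => (((hs _).1 h).1 k).nodup hacyc) ((hs _).1 h).2
  refine Finset.sum_involution (fun a _ => pivotFlip a) ?_ ?_ ?_ ?_
  · rintro ⟨σ, P⟩ ha
    obtain ⟨x, i, j, h⟩ := hpivot σ P ha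
    rw [h.pivotFlip_eq, h.prod_listWt_swapTails, Equiv.Perm.sign_mul,
      Equiv.Perm.sign_swap h.lt.ne, mul_neg_one, Units.neg_smul, add_neg_cancel]
  · rintro ⟨σ, P⟩ ha -
    obtain ⟨x, i, j, h⟩ := hpivot σ P ha
    rw [h.pivotFlip_eq]
    intro he
    exact h.lt.ne (Equiv.swap_eq_one_iff.mp (mul_eq_left.mp (congrArg Sigma.fst he)))
  · rintro ⟨σ, P⟩ ha
    obtain ⟨x, i, j, h⟩ := hpivot σ P ha
    rw [h.pivotFlip_eq]
    exact (hs _).2 ⟨h.isDirPath_swapTails ((hs _).1 ha).1, h.not_vertexDisjoint_swapTails⟩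
  · rintro ⟨σ, P⟩ ha
    obtain ⟨x, i, j, h⟩ := hpivot σ P ha
    exact h.pivotFlip_pivotFlip σ

open Classical in
theorem det_eq_sum_sign_smul_sum_vertexDisjoint (hacyc : ∀ a, ¬ Relation.TransGen Adj a a)
    (hpaths : ∀ a b p, p ∈ paths a b ↔ IsDirPath Adj a b p) (w : V → V → R)
    (u v : ι → V) :
    (Matrix.of fun i j => ∑ p ∈ paths (u i) (v j), listWt w p).det =
      ∑ σ : Equiv.Perm ι, Equiv.Perm.sign σ •
        ∑ P ∈ (Fintype.piFinset fun k => paths (u k) (v (σ k))).filter VertexDisjoint,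
          ∏ k, listWt w (P k) := by
  rw [← Matrix.det_transpose, Matrix.det_apply]
  simp only [Matrix.transpose_apply, Matrix.of_apply, Finset.prod_univ_sum]
  have hsplit : ∀ σ : Equiv.Perm ι,
      Equiv.Perm.sign σ • ∑ P ∈ Fintype.piFinset (fun k => paths (u k) (v (σ k))),
        ∏ k, listWt w (P k) =
      Equiv.Perm.sign σ • ∑ P ∈ (Fintype.piFinset fun k => paths (u k) (v (σ k))).filter
          VertexDisjoint, ∏ k, listWt w (P k) +
        ∑ P ∈ (Fintype.piFinset fun k => paths (u k) (v (σ k))).filter (¬ VertexDisjoint ·),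
          Equiv.Perm.sign σ • ∏ k, listWt w (P k) := fun σ => by
    rw [← Finset.sum_filter_add_sum_filter_not _ VertexDisjoint, smul_add]
    exact congrArg _ Finset.smul_sum
  rw [Finset.sum_congr rfl fun σ _ => hsplit σ, Finset.sum_add_distrib,
    sum_sign_smul_prod_listWt_not_vertexDisjoint_eq_zero hacyc hpaths, add_zero]

theorem not_vertexDisjoint_of_ne_one {u v : ι → V}
    (hcompat : ∀ i j k l : ι, i < j → l < k → ∀ p q : List V,
      IsDirPath Adj (u i) (v k) p → IsDirPath Adj (u j) (v l) q →
        ∃ x : V, x ∈ p ∧ x ∈ q)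
    {σ : Equiv.Perm ι} (hσ : σ ≠ 1) {P : ι → List V}
    (hP : ∀ k, IsDirPath Adj (u k) (v (σ k)) (P k)) : ¬ VertexDisjoint P := by
  have hmono : ¬ StrictMono σ := fun hmono => hσ (Equiv.ext fun k => hmono.apply_eq)
  obtain ⟨i, j, hij, hle⟩ : ∃ i j, i < j ∧ σ j ≤ σ i := by
    simpa [StrictMono] using hmono
  have hlt : σ j < σ i := hle.lt_of_ne (σ.injective.ne hij.ne')
  obtain ⟨x, hxi, hxj⟩ := hcompat i j (σ i) (σ j) hij hlt _ _ (hP i) (hP j)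
  exact fun hd => hd i j hij.ne x ⟨hxi, hxj⟩

open Classical in
theorem det_eq_sum_vertexDisjoint_of_compatible (hacyc : ∀ a, ¬ Relation.TransGen Adj a a)
    (hpaths : ∀ a b p, p ∈ paths a b ↔ IsDirPath Adj a b p) (w : V → V → R)
    {u v : ι → V}
    (hcompat : ∀ i j k l : ι, i < j → l < k → ∀ p q : List V,
      IsDirPath Adj (u i) (v k) p → IsDirPath Adj (u j) (v l) q →
        ∃ x : V, x ∈ p ∧ x ∈ q) :
    (Matrix.of fun i j => ∑ p ∈ paths (u i) (v j), listWt w p).det =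
      ∑ P ∈ (Fintype.piFinset fun k => paths (u k) (v k)).filter VertexDisjoint,
        ∏ k, listWt w (P k) := by
  rw [det_eq_sum_sign_smul_sum_vertexDisjoint hacyc hpaths, Finset.sum_eq_single 1]
  · simp
  · intro σ _ hσ
    rw [Finset.filter_eq_empty_iff.mpr fun P hP => not_vertexDisjoint_of_ne_one hcompat hσ
      fun k => (hpaths _ _ _).mp (Fintype.mem_piFinset.mp hP k), Finset.sum_empty, smul_zero]
  · exact fun h => absurd (Finset.mem_univ 1) h

end Cancellation

end LGV

/-- The Lindström–Gessel–Viennot identity in the compatible case. -/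
theorem lgv_compatible {V R : Type*} [Fintype V] [CommRing R]
    (Adj : V → V → Prop) (hacyc : ∀ a, ¬ Relation.TransGen Adj a a)
    (w : V → V → R) (n : ℕ) (u v : Fin n → V)
    (hcompat : ∀ i j k l : Fin n, i < j → l < k →
      ∀ p q : List V, IsDirPath Adj (u i) (v k) p → IsDirPath Adj (u j) (v l) q →
        ∃ x : V, x ∈ p ∧ x ∈ q) :
    (∑ᶠ P ∈ {P : Fin n → List V |
        (∀ i, IsDirPath Adj (u i) (v i) (P i)) ∧
        ∀ i j, i ≠ j → ∀ x : V, ¬(x ∈ P i ∧ x ∈ P j)},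
      ∏ i, listWt w (P i)) =
      Matrix.det (Matrix.of fun i j : Fin n =>
        ∑ᶠ p ∈ {p : List V | IsDirPath Adj (u i) (v j) p}, listWt w p) := by
  classical
  have hfin := LGV.finite_setOf_isDirPath hacyc (Adj := Adj)
  have hpaths : ∀ a b p, p ∈ (hfin a b).toFinset ↔ IsDirPath Adj a b p :=
    fun _ _ _ => Set.Finite.mem_toFinset _
  have hsystems : {P : Fin n → List V | (∀ i, IsDirPath Adj (u i) (v i) (P i)) ∧
      ∀ i j, i ≠ j → ∀ x : V, ¬(x ∈ P i ∧ x ∈ P j)} =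
      ↑((Fintype.piFinset fun k => (hfin (u k) (v k)).toFinset).filter LGV.VertexDisjoint) := by
    ext P
    simp [Fintype.mem_piFinset, hpaths, LGV.VertexDisjoint]
  simp only [hsystems, finsum_mem_coe_finset, finsum_mem_eq_finite_toFinset_sum _ (hfin _ _)]
  exact (LGV.det_eq_sum_vertexDisjoint_of_compatible hacyc hpaths w hcompat).symm
end

section
/- If a family P of n paths has connection type π ∈ Sₙ and P* is obtained from P by swapping the tails of two paths pᵢ and pⱼ (i ≠ j) after a common vertex, then the connection type of P* is σ∘π where σ is the transposition (π(i) π(j)); in particular sgn(connection type of P*) = −sgn(π). -/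
open Finset Equiv

namespace IsDirPath

variable {V : Type*} {Adj : V → V → Prop}

theorem tail_swap {u v u' v' x : V} {a b a' b' : List V}
    (h : IsDirPath Adj u v (a ++ x :: b)) (h' : IsDirPath Adj u' v' (a' ++ x :: b')) :
    IsDirPath Adj u v' (a ++ x :: b') := by
  obtain ⟨hchain, hhead, -⟩ := h
  obtain ⟨hchain', -, hlast'⟩ := h'
  obtain ⟨hchain_a, -, hjoin⟩ := List.isChain_append.mp hchain
  refine ⟨List.isChain_append.mpr ⟨hchain_a, List.IsChain.right_of_append hchain', ?_⟩, ?_, ?_⟩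
  · simpa using hjoin
  · simpa [List.head?_append] using hhead
  · simpa using hlast'

theorem update_update_swap {ι : Type*} [DecidableEq ι] {u v : ι → V}
    {π : Perm ι} {P : ι → List V} (hP : ∀ k, IsDirPath Adj (u k) (v (π k)) (P k))
    {i j : ι} (hij : i ≠ j) {p q : List V}
    (hp : IsDirPath Adj (u i) (v (π j)) p) (hq : IsDirPath Adj (u j) (v (π i)) q) (k : ι) :
    IsDirPath Adj (u k) (v ((swap (π i) (π j) * π) k))
      (Function.update (Function.update P i p) j q k) := by
  rw [← mul_swap_eq_swap_mul, Perm.mul_apply]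
  rcases eq_or_ne k j with rfl | hkj
  · simpa using hq
  rcases eq_or_ne k i with rfl | hki
  · simpa [hkj] using hp
  · simpa [Function.update_of_ne, hki, hkj, swap_apply_of_ne_of_ne] using hP k

end IsDirPath

theorem Equiv.Perm.sign_swap_mul {α : Type*} [DecidableEq α] [Fintype α] {a b : α}
    (hab : a ≠ b) (σ : Perm α) : Perm.sign (swap a b * σ) = -Perm.sign σ := by
  rw [map_mul, Perm.sign_swap hab, neg_one_mul]

theorem tail_swap_connection_type_general {V : Type*}
    (Adj : V → V → Prop) (n : ℕ) (u v : Fin n → V) (π : Equiv.Perm (Fin n))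
    (P : Fin n → List V)
    (hP : ∀ k, IsDirPath Adj (u k) (v (π k)) (P k))
    (i j : Fin n) (hij : i ≠ j) (x : V) (a₁ b₁ a₂ b₂ : List V)
    (hdi : P i = a₁ ++ x :: b₁) (hdj : P j = a₂ ++ x :: b₂) :
    (∀ k, IsDirPath Adj (u k)
        (v ((Equiv.swap (π i) (π j) * π) k))
        ((Function.update (Function.update P i (a₁ ++ x :: b₂)) j (a₂ ++ x :: b₁)) k)) ∧
      Equiv.Perm.sign (Equiv.swap (π i) (π j) * π) = -Equiv.Perm.sign π := by
  have hPi : IsDirPath Adj (u i) (v (π i)) (a₁ ++ x :: b₁) := hdi ▸ hP i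
  have hPj : IsDirPath Adj (u j) (v (π j)) (a₂ ++ x :: b₂) := hdj ▸ hP j
  exact ⟨IsDirPath.update_update_swap hP hij (hPi.tail_swap hPj) (hPj.tail_swap hPi),
    Perm.sign_swap_mul (π.injective.ne hij) π⟩

theorem tail_swap_connection_type {V : Type*} [DecidableEq V]
    (Adj : V → V → Prop) (n : ℕ) (u v : Fin n → V) (π : Equiv.Perm (Fin n))
    (P : Fin n → List V)
    (hP : ∀ k, IsDirPath Adj (u k) (v (π k)) (P k))
    (i j : Fin n) (hij : i ≠ j) (x : V) (a₁ b₁ a₂ b₂ : List V)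
    (hdi : P i = a₁ ++ x :: b₁) (hdj : P j = a₂ ++ x :: b₂) :
    (∀ k, IsDirPath Adj (u k)
        (v ((Equiv.swap (π i) (π j) * π) k))
        ((Function.update (Function.update P i (a₁ ++ x :: b₂)) j (a₂ ++ x :: b₁)) k)) ∧
      Equiv.Perm.sign (Equiv.swap (π i) (π j) * π) = -Equiv.Perm.sign π :=
  tail_swap_connection_type_general Adj n u v π P hP i j hij x a₁ b₁ a₂ b₂ hdi hdj
end
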